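/- Let λ > 0 and define the Riesz kernel R_λ(y, z) = -(2λ/π) ∫_0^π (y - z cos θ)(sin θ)^{2λ-1} / (y² + z² - 2yz cos θ)^{λ+1} dθ for y ≠ z. Then there is a constant C₀ > 0 (depending only on λ) such that for all 0 < z < y, R_λ(y, z) ≤ -C₀ / (y^{2λ}(y - z)). -/

import Mathlib

/-!
The integrand is nonnegative on `[0, π]`, so the integral is at least its part over
`[0, δ]` with `δ = (y - z) / y`. There the numerator is at least `y - z`, the denominator
`(y - z)² + 2yz(1 - cos θ)` is at most `2 (y - z)²` because `yz θ² ≤ (yθ)² ≤ (y - z)²`, and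
`sin θ ≍ θ`. Integrating `θ ^ (2λ - 1)` over `[0, δ]` gives `δ ^ (2λ) / (2λ)`, and
`(y - z) δ ^ (2λ) / (y - z) ^ (2λ + 2) = 1 / (y ^ (2λ) (y - z))`.
Integrability on `[0, π]` (without it the integral would be the junk value `0`) comes from
Jordan's inequality `sin θ ≥ (2/π) min θ (π - θ)`, which dominates `sin θ ^ (2λ - 1)` by
integrable powers at both endpoints.
-/

open MeasureTheory Real

noncomputable def rieszKernel (lam y z : ℝ) : ℝ :=
  -(2 * lam / π) * ∫ θ in (0:ℝ)..π,
    (y - z * Real.cos θ) * (Real.sin θ) ^ (2*lam - 1) /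
      (y ^ 2 + z ^ 2 - 2 * y * z * Real.cos θ) ^ (lam + 1)

open Set

lemma two_div_pi_mul_min_le_sin {θ : ℝ} (h0 : 0 ≤ θ) (hπ : θ ≤ π) :
    2 / π * min θ (π - θ) ≤ sin θ := by
  rcases le_total θ (π / 2) with h | h
  · exact (mul_le_mul_of_nonneg_left (min_le_left _ _) (by positivity)).trans (mul_le_sin h0 h)
  · calc 2 / π * min θ (π - θ) ≤ 2 / π * (π - θ) :=
          mul_le_mul_of_nonneg_left (min_le_right _ _) (by positivity)
      _ ≤ sin (π - θ) := mul_le_sin (by linarith) (by linarith)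
      _ = sin θ := sin_pi_sub θ

lemma sin_rpow_le_of_nonpos {p θ : ℝ} (hp : p ≤ 0) (h0 : 0 < θ) (hπ : θ < π) :
    sin θ ^ p ≤ (2 / π) ^ p * (θ ^ p + (π - θ) ^ p) := by
  have hmin : 0 < min θ (π - θ) := lt_min h0 (by linarith)
  calc sin θ ^ p ≤ (2 / π * min θ (π - θ)) ^ p :=
        rpow_le_rpow_of_nonpos (by positivity) (two_div_pi_mul_min_le_sin h0.le hπ.le) hp
    _ = (2 / π) ^ p * min θ (π - θ) ^ p := mul_rpow (by positivity) hmin.le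
    _ ≤ (2 / π) ^ p * (θ ^ p + (π - θ) ^ p) := by
        gcongr
        rcases min_choice θ (π - θ) with h | h <;> rw [h]
        · exact le_add_of_nonneg_right (rpow_nonneg (by linarith) p)
        · exact le_add_of_nonneg_left (rpow_nonneg h0.le p)

lemma intervalIntegrable_sin_rpow {p : ℝ} (hp : -1 < p) :
    IntervalIntegrable (fun θ => sin θ ^ p) volume 0 π := by
  rcases le_or_gt 0 p with hp0 | hp0
  · exact (continuous_sin.rpow_const fun _ => Or.inr hp0).intervalIntegrable 0 π
  have hdom : IntervalIntegrable (fun θ : ℝ => (2 / π) ^ p * (θ ^ p + (π - θ) ^ p)) volume 0 π := by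
    refine ((intervalIntegral.intervalIntegrable_rpow' hp).add ?_).const_mul _
    simpa using
      ((intervalIntegral.intervalIntegrable_rpow' hp (a := 0) (b := π)).comp_sub_left π).symm
  refine hdom.mono_fun (measurable_sin.pow_const p).aestronglyMeasurable ?_
  rw [uIoc_of_le pi_pos.le, Measure.restrict_congr_set Ioo_ae_eq_Ioc.symm]
  filter_upwards [ae_restrict_mem measurableSet_Ioo] with θ hθ
  rw [norm_of_nonneg (rpow_nonneg (sin_pos_of_pos_of_lt_pi hθ.1 hθ.2).le p)]
  exact (sin_rpow_le_of_nonpos hp0.le hθ.1 hθ.2).trans (le_norm_self _)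

lemma min_mul_rpow_le_sin_rpow {p θ : ℝ} (h0 : 0 < θ) (hθ : θ ≤ π / 2) :
    min ((2 / π) ^ p) 1 * θ ^ p ≤ sin θ ^ p := by
  rcases le_total 0 p with hp | hp
  · calc min ((2 / π) ^ p) 1 * θ ^ p ≤ (2 / π) ^ p * θ ^ p := by gcongr; exact min_le_left _ _
      _ = (2 / π * θ) ^ p := (mul_rpow (by positivity) h0.le).symm
      _ ≤ sin θ ^ p := rpow_le_rpow (by positivity) (mul_le_sin h0.le hθ) hp
  · calc min ((2 / π) ^ p) 1 * θ ^ p ≤ 1 * θ ^ p := by gcongr; exact min_le_right _ _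
      _ = θ ^ p := one_mul _
      _ ≤ sin θ ^ p :=
        rpow_le_rpow_of_nonpos (sin_pos_of_pos_of_lt_pi h0 (by linarith [pi_pos])) (sin_le h0.le) hp

section RieszIntegrand

variable {lam y z θ : ℝ}

lemma sub_sq_le_cosine_law (hyz : 0 ≤ y * z) (θ : ℝ) :
    (y - z) ^ 2 ≤ y ^ 2 + z ^ 2 - 2 * y * z * cos θ := by
  nlinarith [cos_le_one θ]

lemma cosine_law_le_two_mul_sub_sq (hz : 0 ≤ z) (hzy : z ≤ y) (hθ : 0 ≤ θ)
    (hyθ : y * θ ≤ y - z) : y ^ 2 + z ^ 2 - 2 * y * z * cos θ ≤ 2 * (y - z) ^ 2 := by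
  have hcos : 1 - θ ^ 2 / 2 ≤ cos θ := one_sub_sq_div_two_le_cos
  have hy : 0 ≤ y := hz.trans hzy
  have hyθ_sq : (y * θ) ^ 2 ≤ (y - z) ^ 2 := pow_le_pow_left₀ (mul_nonneg hy hθ) hyθ 2
  have h1 := mul_le_mul_of_nonneg_left hcos (mul_nonneg (mul_nonneg zero_le_two hy) hz)
  have h2 := mul_le_mul_of_nonneg_right hzy (mul_nonneg hy (sq_nonneg θ))
  nlinarith

noncomputable def rieszIntegrand (lam y z θ : ℝ) : ℝ :=
  (y - z * cos θ) * sin θ ^ (2 * lam - 1) / (y ^ 2 + z ^ 2 - 2 * y * z * cos θ) ^ (lam + 1)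

lemma rieszIntegrand_nonneg (hz : 0 ≤ z) (hzy : z ≤ y) (h0 : 0 ≤ θ) (hπ : θ ≤ π) :
    0 ≤ rieszIntegrand lam y z θ := by
  have hnum : 0 ≤ y - z * cos θ := by nlinarith [cos_le_one θ]
  have hden := (sq_nonneg _).trans (sub_sq_le_cosine_law (mul_nonneg (hz.trans hzy) hz) θ)
  have hsin := sin_nonneg_of_nonneg_of_le_pi h0 hπ
  unfold rieszIntegrand
  positivity

lemma intervalIntegrable_rieszIntegrand (hlam : 0 < lam) (hz : 0 ≤ z) (hzy : z < y) :
    IntervalIntegrable (rieszIntegrand lam y z) volume 0 π := by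
  have hdom := (intervalIntegrable_sin_rpow (p := 2 * lam - 1) (by linarith)).const_mul
    ((y + z) / ((y - z) ^ 2) ^ (lam + 1))
  refine hdom.mono_fun (by unfold rieszIntegrand; fun_prop : Measurable _).aestronglyMeasurable ?_
  rw [uIoc_of_le pi_pos.le]
  filter_upwards [ae_restrict_mem measurableSet_Ioc] with θ hθ
  rw [norm_of_nonneg (rieszIntegrand_nonneg hz hzy.le hθ.1.le hθ.2)]
  refine le_trans ?_ (le_norm_self _)
  have hsin := sin_nonneg_of_nonneg_of_le_pi hθ.1.le hθ.2
  have hden := sub_sq_le_cosine_law (mul_nonneg (hz.trans hzy.le) hz) θ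
  have hyz : 0 < y - z := sub_pos.2 hzy
  have hy : 0 < y := hz.trans_lt hzy
  rw [div_mul_eq_mul_div]
  unfold rieszIntegrand
  exact div_le_div₀ (by positivity)
    (mul_le_mul_of_nonneg_right (by nlinarith [neg_one_le_cos θ]) (rpow_nonneg hsin _))
    (by positivity) (rpow_le_rpow (by positivity) hden (by linarith))

lemma le_rieszIntegrand (hlam : -1 ≤ lam) (hz : 0 ≤ z) (hzy : z < y) (hθ : 0 < θ)
    (hyθ : y * θ ≤ y - z) :
    (y - z) * min ((2 / π) ^ (2 * lam - 1)) 1 / (2 * (y - z) ^ 2) ^ (lam + 1) *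
      θ ^ (2 * lam - 1) ≤ rieszIntegrand lam y z θ := by
  have hyz : 0 < y - z := sub_pos.2 hzy
  have hθπ : θ ≤ π / 2 := by
    have : θ ≤ 1 := by nlinarith
    linarith [pi_gt_three]
  have hsin := min_mul_rpow_le_sin_rpow (p := 2 * lam - 1) hθ hθπ
  have hden := sub_sq_le_cosine_law (mul_nonneg (hz.trans hzy.le) hz) θ
  have hnum : y - z ≤ y - z * cos θ := by nlinarith [cos_le_one θ]
  unfold rieszIntegrand
  calc (y - z) * min ((2 / π) ^ (2 * lam - 1)) 1 / (2 * (y - z) ^ 2) ^ (lam + 1) *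
        θ ^ (2 * lam - 1)
      = (y - z) * (min ((2 / π) ^ (2 * lam - 1)) 1 * θ ^ (2 * lam - 1)) /
          (2 * (y - z) ^ 2) ^ (lam + 1) := by ring
    _ ≤ (y - z * cos θ) * sin θ ^ (2 * lam - 1) /
          (y ^ 2 + z ^ 2 - 2 * y * z * cos θ) ^ (lam + 1) := by
        have hsin_nonneg := sin_nonneg_of_nonneg_of_le_pi hθ.le (by linarith [pi_pos])
        have hD : 0 < y ^ 2 + z ^ 2 - 2 * y * z * cos θ := (pow_pos hyz 2).trans_le hden
        refine div_le_div₀ (mul_nonneg (by linarith) (rpow_nonneg hsin_nonneg _))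
          (mul_le_mul hnum hsin (by positivity) (by linarith)) (by positivity)
          (rpow_le_rpow hD.le (cosine_law_le_two_mul_sub_sq hz hzy.le hθ.le hyθ) (by linarith))

lemma le_integral_rieszIntegrand (hlam : 0 < lam) (hz : 0 ≤ z) (hzy : z < y) :
    min ((2 / π) ^ (2 * lam - 1)) 1 / (2 * lam * 2 ^ (lam + 1)) / (y ^ (2 * lam) * (y - z)) ≤
      ∫ θ in 0..π, rieszIntegrand lam y z θ := by
  have hyz : 0 < y - z := sub_pos.2 hzy
  have hy : 0 < y := hz.trans_lt hzy
  set k := min ((2 / π) ^ (2 * lam - 1)) 1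
  set δ := (y - z) / y
  have hδ0 : 0 ≤ δ := by positivity
  have hδπ : δ ≤ π := ((div_le_one hy).2 (by linarith)).trans (by linarith [pi_gt_three])
  have hfint := intervalIntegrable_rieszIntegrand hlam hz hzy
  have hpow : (2 * (y - z) ^ 2) ^ (lam + 1) =
      2 ^ (lam + 1) * ((y - z) ^ (2 * lam) * (y - z) ^ 2) := by
    rw [mul_rpow zero_le_two (sq_nonneg _), ← rpow_two, ← rpow_mul hyz.le, ← rpow_add hyz]
    ring_nf
  calc _ = ∫ θ in 0..δ, (y - z) * k / (2 * (y - z) ^ 2) ^ (lam + 1) * θ ^ (2 * lam - 1) := by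
        rw [intervalIntegral.integral_const_mul, integral_rpow (Or.inl (by linarith)),
          sub_add_cancel, zero_rpow (by positivity), sub_zero, div_rpow hyz.le hy.le, hpow]
        field_simp
    _ ≤ ∫ θ in 0..δ, rieszIntegrand lam y z θ :=
        intervalIntegral.integral_mono_on_of_le_Ioo hδ0
          ((intervalIntegral.intervalIntegrable_rpow' (by linarith)).const_mul _)
          (hfint.mono_set (uIcc_subset_uIcc left_mem_uIcc (mem_uIcc_of_le hδ0 hδπ)))
          fun θ hθ => le_rieszIntegrand (by linarith) hz hzy hθ.1 ((le_div_iff₀' hy).1 hθ.2.le)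
    _ ≤ ∫ θ in 0..π, rieszIntegrand lam y z θ :=
        intervalIntegral.integral_mono_interval le_rfl hδ0 hδπ
          ((ae_restrict_mem measurableSet_Ioc).mono fun θ hθ =>
            rieszIntegrand_nonneg hz hzy.le hθ.1.le hθ.2) hfint

end RieszIntegrand

theorem rieszKernel_lower_bound (lam : ℝ) (hlam : 0 < lam) :
    ∃ C₀ > (0:ℝ), ∀ y z : ℝ, 0 < z → z < y →
      rieszKernel lam y z ≤ -C₀ / (y ^ (2*lam) * (y - z)) := by
  set c := min ((2 / π) ^ (2 * lam - 1)) 1 / (2 * lam * 2 ^ (lam + 1))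
  refine ⟨2 * lam / π * c, by positivity, fun y z hz hzy => ?_⟩
  calc rieszKernel lam y z = -(2 * lam / π) * ∫ θ in 0..π, rieszIntegrand lam y z θ := rfl
    _ ≤ -(2 * lam / π) * (c / (y ^ (2 * lam) * (y - z))) :=
        mul_le_mul_of_nonpos_left (le_integral_rieszIntegrand hlam hz.le hzy)
          (neg_nonpos.2 (by positivity))
    _ = -(2 * lam / π * c) / (y ^ (2 * lam) * (y - z)) := by ring
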